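/- Let γ > 1 and consider the Cauchy problem for the conservative ideal MHD system with smooth initial data ρ = 1, p(x,0) = 1 - exp(-|x|²), v = (1,1,1), B = (1 + (ε/3)arctan x₁, 1 + (ε/3)arctan x₂, 1 + (ε/3)arctan x₃), ε > 0. Assume a smooth solution exists on [0, t*). For smooth solutions the pressure satisfies p_t + v·∇p + γp ∇·v + (γ-1)(v·B)∇·B = 0. Then at x = 0, t = 0 one has ∇p = 0, ∇·v = 0, ∇·B = ε, p(0,0) = 0, and hence p_t(0,0) = -3(γ-1)ε < 0; consequently there exists t₀ ∈ (0, t*) with p(0, t) < 0 for all t ∈ (0, t₀). -/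

import Mathlib

/-!
At the origin the initial pressure vanishes and is minimal, so the transport term `v·∇p` and the
compression term `γ p ∇·v` of the pressure equation drop out, leaving
`p_t = -(γ-1)(v·B)∇·B = -3(γ-1)ε`. A zero of `t ↦ p(0,t)` with negative derivative is followed
by negative values.
-/

open Real Filter

lemma exists_neg_on_Ioo_of_deriv_neg {f : ℝ → ℝ} {a T : ℝ} (hf : deriv f a < 0) (ha : f a = 0)
    (hT : a < T) : ∃ t₀, a < t₀ ∧ t₀ < T ∧ ∀ t, a < t → t < t₀ → f t < 0 := by
  obtain ⟨l, u, ⟨hla, hau⟩, hsub⟩ :=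
    (eventually_nhdsWithin_sign_eq_of_deriv_neg hf ha).exists_Ioo_subset
  refine ⟨min u ((a + T) / 2), lt_min hau (by linarith),
    (min_le_right _ _).trans_lt (by linarith), fun t hat htu => ?_⟩
  have hsign : SignType.sign (f t) = SignType.sign (a - t) :=
    hsub ⟨hla.trans hat, htu.trans_le (min_le_left _ _)⟩
  rwa [sign_neg (sub_neg.mpr hat), sign_eq_neg_one_iff] at hsign

lemma isLocalMin_one_sub_exp_neg_sum_sq {ι : Type*} [Fintype ι] :
    IsLocalMin (fun y : ι → ℝ => 1 - exp (-(∑ i, (y i) ^ 2))) 0 :=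
  Eventually.of_forall fun y => by
    have : exp (-(∑ i, (y i) ^ 2)) ≤ 1 :=
      exp_le_one_iff.mpr (neg_nonpos.mpr (Finset.sum_nonneg fun i _ => sq_nonneg (y i)))
    simpa using this

lemma fderiv_comp_apply_single {ι : Type*} [Fintype ι] [DecidableEq ι] {g : ℝ → ℝ}
    {x : ι → ℝ} {i : ι} (hg : DifferentiableAt ℝ g (x i)) :
    fderiv ℝ (fun y : ι → ℝ => g (y i)) x (Pi.single i 1) = deriv g (x i) := by
  rw [HasFDerivAt.fderiv (f := fun y : ι → ℝ => g (y i))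
    (hg.hasDerivAt.comp_hasFDerivAt x (hasFDerivAt_apply i x))]
  simp

lemma hasDerivAt_one_add_mul_arctan_zero (c : ℝ) :
    HasDerivAt (fun s => 1 + c * arctan s) c 0 := by
  simpa using ((hasDerivAt_arctan 0).const_mul c).const_add 1

theorem negative_pressure_if_divB_nonzero
    (γ ε tstar : ℝ) (hγ : 1 < γ) (hε : 0 < ε) (htstar : 0 < tstar)
    (p : (Fin 3 → ℝ) → ℝ → ℝ) (v B : (Fin 3 → ℝ) → ℝ → Fin 3 → ℝ)
    -- initial data:
    (hp0 : ∀ x, p x 0 = 1 - Real.exp (-(∑ i, (x i) ^ 2)))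
    (hv0 : ∀ x i, v x 0 i = 1)
    (hB0 : ∀ x i, B x 0 i = 1 + (ε / 3) * Real.arctan (x i))
    -- the pressure equation for smooth solutions, on 0 ≤ t < t*:
    (hPDE : ∀ x t, 0 ≤ t → t < tstar →
      deriv (fun s => p x s) t
        + (∑ i, v x t i * fderiv ℝ (fun y => p y t) x (Pi.single i 1))
        + γ * p x t * (∑ i, fderiv ℝ (fun y => v y t i) x (Pi.single i 1))
        + (γ - 1) * (∑ i, v x t i * B x t i)
            * (∑ i, fderiv ℝ (fun y => B y t i) x (Pi.single i 1)) = 0) :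
    deriv (fun t => p 0 t) 0 = -(3 * (γ - 1) * ε) ∧
    ∃ t₀, 0 < t₀ ∧ t₀ < tstar ∧ ∀ t, 0 < t → t < t₀ → p 0 t < 0 := by
  have hp : p 0 0 = 0 := by simp [hp0]
  have hgrad_p : fderiv ℝ (fun y => p y 0) 0 = 0 := by
    simpa only [hp0] using isLocalMin_one_sub_exp_neg_sum_sq.fderiv_eq_zero
  have hv_dot_B : ∑ i, v 0 0 i * B 0 0 i = 3 := by simp [hv0, hB0]
  have hdiv_B : ∑ i, fderiv ℝ (fun y => B y 0 i) 0 (Pi.single i 1) = ε := by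
    have hB := hasDerivAt_one_add_mul_arctan_zero (ε / 3)
    simp only [hB0]
    rw [Finset.sum_congr rfl fun i _ =>
      fderiv_comp_apply_single (x := (0 : Fin 3 → ℝ)) (i := i) hB.differentiableAt]
    simp only [Pi.zero_apply, hB.deriv, Finset.sum_const, Finset.card_univ, Fintype.card_fin,
      nsmul_eq_mul]
    ring
  have hp_t : deriv (fun t => p 0 t) 0 = -(3 * (γ - 1) * ε) := by
    have := hPDE 0 0 le_rfl htstar
    rw [hp, hgrad_p, hv_dot_B, hdiv_B] at this
    simp only [zero_apply, mul_zero, Finset.sum_const_zero, add_zero,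
      zero_mul] at this
    linarith
  refine ⟨hp_t, exists_neg_on_Ioo_of_deriv_neg ?_ hp htstar⟩
  rw [hp_t, neg_lt_zero]
  have := sub_pos.mpr hγ
  positivity
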